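/- Let g : A → C be a ring homomorphism and J' an ideal of C such that the annihilator of J' in the ring g(A) + J' is zero. Then there is an isomorphism of A-modules Hom_{A ⋈^g J'}(A, A ⋈^g J') ≅ g⁻¹(J') × 0, where A is regarded as an A ⋈^g J'-module via the surjection A ⋈^g J' → A, (a, g(a)+j') ↦ a, and g⁻¹(J') × 0 = {(a,0) : a ∈ g⁻¹(J')} is an ideal of A ⋈^g J'. -/

import Mathlib

variable {A C : Type} [CommRing A] [CommRing C]

/-- The amalgamation `A ⋈^g J' = {(a, g a + j') : a ∈ A, j' ∈ J'}` of `A` and `C` along the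
ideal `J'` with respect to the ring homomorphism `g`, as a subring of `A × C`. -/
def Amalg (g : A →+* C) (J' : Ideal C) : Subring (A × C) where
  carrier := {x | ∃ a : A, ∃ j ∈ J', x = (a, g a + j)}
  zero_mem' := ⟨0, 0, J'.zero_mem, by simp <;> rfl⟩
  one_mem' := ⟨1, 0, J'.zero_mem, by simp <;> rfl⟩
  add_mem' := by
    rintro x y ⟨a, j, hj, rfl⟩ ⟨b, k, hk, rfl⟩
    exact ⟨a + b, j + k, J'.add_mem hj hk, by
      simp only [Prod.mk_add_mk, map_add, Prod.mk.injEq]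
      exact ⟨trivial, by ring⟩⟩
  neg_mem' := by
    rintro x ⟨a, j, hj, rfl⟩
    exact ⟨-a, -j, J'.neg_mem hj, by
      simp only [Prod.neg_mk, map_neg, Prod.mk.injEq]
      exact ⟨trivial, by ring⟩⟩
  mul_mem' := by
    rintro x y ⟨a, j, hj, rfl⟩ ⟨b, k, hk, rfl⟩
    exact ⟨a * b, g a * k + j * g b + j * k,
      J'.add_mem (J'.add_mem (J'.mul_mem_left _ hk) (J'.mul_mem_right _ hj))
        (J'.mul_mem_right _ hj), by
      simp only [Prod.mk_mul_mk, map_mul, Prod.mk.injEq]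
      exact ⟨trivial, by ring⟩⟩

/-- The canonical ring homomorphism `A → A ⋈^g J'`, `a ↦ (a, g a)`. -/
def Amalg.incl (g : A →+* C) (J' : Ideal C) : A →+* Amalg g J' where
  toFun a := ⟨(a, g a), a, 0, J'.zero_mem, by simp⟩
  map_one' := Subtype.ext (by simp)
  map_mul' x y := Subtype.ext (by simp [Prod.mk_mul_mk])
  map_zero' := Subtype.ext (by simp)
  map_add' x y := Subtype.ext (by simp [Prod.mk_add_mk])

/-- The projection `A ⋈^g J' → A`, `(a, g a + j') ↦ a`; it is surjective
with kernel `0 × J'`. -/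
def Amalg.proj (g : A →+* C) (J' : Ideal C) : Amalg g J' →+* A :=
  (RingHom.fst A C).comp (Amalg g J').subtype

/-- The ideal `g⁻¹(J') × 0 = {(a, 0) : a ∈ g⁻¹(J')}` of `A ⋈^g J'`. -/
def Amalg.idealComap (g : A →+* C) (J' : Ideal C) : Ideal (Amalg g J') where
  carrier := {x | ∃ a ∈ J'.comap g, (x : A × C) = (a, 0)}
  zero_mem' := ⟨0, (J'.comap g).zero_mem, by simp <;> rfl⟩
  add_mem' := by
    rintro x y ⟨a, ha, hx⟩ ⟨b, hb, hy⟩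
    refine ⟨a + b, (J'.comap g).add_mem ha hb, ?_⟩
    have : ((x + y : Amalg g J') : A × C) = (x : A × C) + (y : A × C) := rfl
    rw [this, hx, hy]
    simp
  smul_mem' := by
    rintro c x ⟨a, ha, hx⟩
    refine ⟨(c : A × C).1 * a, (J'.comap g).mul_mem_left _ ha, ?_⟩
    have : ((c • x : Amalg g J') : A × C) = (c : A × C) * (x : A × C) := rfl
    rw [this, hx]
    simp [Prod.ext_iff]

/-!
Since `A` is the quotient of `A ⋈^g J'` by `0 × J'` through the first projection, a homomorphism
`A → A ⋈^g J'` is determined by the image of `1`, which may be any element annihilated by `0 × J'`.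
An element `(a, g a + j')` is annihilated by `0 × J'` exactly when `g a + j'` annihilates `J'` in
`g(A) + J'`, so by hypothesis exactly when `g a + j' = 0`, i.e. when it lies in `g⁻¹(J') × 0`.
-/

open Submodule

section HomFromQuotient

variable {R S M : Type*} [CommRing R] [CommRing S] [AddCommGroup M] [Module R M] (π : R →+* S)

theorem smul_eq_smul_of_mem_torsionBySet_ker {m : M} (hm : m ∈ torsionBySet R M (RingHom.ker π))
    {x y : R} (hxy : π x = π y) : x • m = y • m := by
  have hker : x - y ∈ RingHom.ker π := by rw [RingHom.mem_ker, map_sub, hxy, sub_self]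
  rw [← sub_eq_zero, ← sub_smul]
  exact (mem_torsionBySet_iff _ _).mp hm ⟨_, hker⟩

noncomputable def homEquivTorsionBySetKer [Module R S] (hπ : Function.Surjective π)
    (hsmul : ∀ (r : R) (a : S), r • a = π r * a) :
    (S →ₗ[R] M) ≃ₗ[R] torsionBySet R M (RingHom.ker π) where
  toFun f := ⟨f 1, (mem_torsionBySet_iff _ _).mpr fun ⟨r, hr⟩ => by
    rw [← f.map_smul r 1, hsmul, (RingHom.mem_ker).mp hr, zero_mul, f.map_zero]⟩
  map_add' _ _ := rfl
  map_smul' _ _ := rfl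
  invFun m :=
    { toFun := fun a => Function.surjInv hπ a • (m : M)
      map_add' := fun a b => by
        rw [← add_smul]
        refine smul_eq_smul_of_mem_torsionBySet_ker π m.2 ?_
        simp only [map_add, Function.surjInv_eq hπ]
      map_smul' := fun r a => by
        rw [RingHom.id_apply, smul_smul]
        refine smul_eq_smul_of_mem_torsionBySet_ker π m.2 ?_
        simp only [map_mul, Function.surjInv_eq hπ, hsmul] }
  left_inv f := LinearMap.ext fun a => by
    simp only [LinearMap.coe_mk, AddHom.coe_mk]
    rw [← f.map_smul, hsmul, Function.surjInv_eq hπ, mul_one]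
  right_inv m := Subtype.ext <| by
    simp only [LinearMap.coe_mk, AddHom.coe_mk]
    rw [smul_eq_smul_of_mem_torsionBySet_ker π m.2 (x := Function.surjInv hπ 1) (y := 1)
      (by rw [Function.surjInv_eq hπ, map_one]), one_smul]

end HomFromQuotient

namespace Amalg

variable {g : A →+* C} {J' : Ideal C}

theorem proj_surjective : Function.Surjective (proj g J') := fun a => ⟨incl g J' a, rfl⟩

theorem mem_ker_proj {x : Amalg g J'} : x ∈ RingHom.ker (proj g J') ↔ (x : A × C).1 = 0 :=
  RingHom.mem_ker

theorem mem_idealComap_iff {x : Amalg g J'} : x ∈ idealComap g J' ↔ (x : A × C).2 = 0 := by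
  constructor
  · rintro ⟨a, -, hx⟩
    rw [hx]
  · intro hx
    obtain ⟨a, j, hj, hxa⟩ := x.2
    have hgj : g a + j = 0 := by rw [← hx, hxa]
    refine ⟨a, ?_, by rw [hxa, hgj]⟩
    rw [Ideal.mem_comap, eq_neg_of_add_eq_zero_left hgj]
    exact J'.neg_mem hj

theorem mem_torsionBySet_ker_proj_iff {x : Amalg g J'} :
    x ∈ torsionBySet _ _ (RingHom.ker (proj g J') : Set (Amalg g J')) ↔
      ∀ y ∈ J', y * (x : A × C).2 = 0 := by
  rw [mem_torsionBySet_iff]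
  constructor
  · intro hx y hy
    simpa using congrArg (fun z : Amalg g J' => (z : A × C).2) (hx ⟨⟨(0, y), 0, y, hy, by simp⟩, rfl⟩)
  · rintro hx ⟨r, hr⟩
    obtain ⟨a, j, hj, hra⟩ := r.2
    have ha : a = 0 := by rw [← mem_ker_proj.mp hr, hra]
    apply Subtype.ext
    change (r : A × C) * x = 0
    rw [hra, ha, map_zero, zero_add]
    exact Prod.ext (zero_mul _) (hx j hj)

theorem idealComap_eq_torsionBySet_ker_proj
    (hann : ∀ (a : A) (j' : C), j' ∈ J' → (∀ y ∈ J', (g a + j') * y = 0) → g a + j' = 0) :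
    idealComap g J' = torsionBySet _ _ (RingHom.ker (proj g J') : Set (Amalg g J')) := by
  ext x
  rw [mem_idealComap_iff, mem_torsionBySet_ker_proj_iff]
  obtain ⟨a, j, hj, hxa⟩ := x.2
  rw [hxa]
  constructor
  · intro hx y _
    rw [hx, mul_zero]
  · intro hx
    exact hann a j hj fun y hy => by rw [mul_comm]; exact hx y hy

end Amalg

theorem amalg_hom_iso (g : A →+* C) (J' : Ideal C)
    (hann : ∀ (a : A) (j' : C), j' ∈ J' → (∀ y ∈ J', (g a + j') * y = 0) → g a + j' = 0) :
    letI : Module (Amalg g J') A := Module.compHom _ (Amalg.proj g J')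
    letI : Module A (A →ₗ[Amalg g J'] Amalg g J') := Module.compHom _ (Amalg.incl g J')
    letI : Module A (Amalg.idealComap g J') := Module.compHom _ (Amalg.incl g J')
    Nonempty ((A →ₗ[Amalg g J'] Amalg g J') ≃ₗ[A] Amalg.idealComap g J') := by
  let _ : Module (Amalg g J') A := Module.compHom _ (Amalg.proj g J')
  let _ : Module A (A →ₗ[Amalg g J'] Amalg g J') := Module.compHom _ (Amalg.incl g J')
  let _ : Module A (Amalg.idealComap g J') := Module.compHom _ (Amalg.incl g J')
  let e := (homEquivTorsionBySetKer (Amalg.proj g J') Amalg.proj_surjective fun _ _ => rfl).trans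
    (LinearEquiv.ofEq _ _ (Amalg.idealComap_eq_torsionBySet_ker_proj hann).symm)
  exact ⟨{ e with map_smul' := fun a f => e.map_smul (Amalg.incl g J' a) f }⟩
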